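/- In the minimal configuration, the transversal t cannot be a supporting line for exactly one of the sets with all other sets meeting t in their interiors: if t supports H_{Sₖ,c_m}(Pₖ) and intersects the interior of every other H_{Sᵢ,c_m}(Pᵢ), i ≠ k, then there exists c̃ < c_m and a line t̃ (a translate of t) that is a transversal of {H_{Sᵢ,c̃}(Pᵢ)}, contradicting minimality of c_m. Hence at least two sets are supported by t. -/

import Mathlib

/-!
Translating `t` slightly towards `S k` makes it cross the interior of every expanded set: of the
`k`-th by convexity, because `S k` is interior to it, and of the others because interiors are open.
A set crossing the interior of `H_{S,c}(P)` still meets `H_{S,c'}(P)` for every `c'` near `c`: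
a point `S + c • (y - S)` with `y` interior to `P` is also `S + c' • (y' - S)` with
`y' = S + (c / c') • (y - S)`, which stays in `P` for `c'` close to `c`.
-/

def homothetyImage (S : EuclideanSpace ℝ (Fin 2)) (c : ℝ)
    (P : Set (EuclideanSpace ℝ (Fin 2))) : Set (EuclideanSpace ℝ (Fin 2)) :=
  (fun X => S + c • (X - S)) '' P

def IsLine (L : Set (EuclideanSpace ℝ (Fin 2))) : Prop :=
  ∃ (f : EuclideanSpace ℝ (Fin 2) →L[ℝ] ℝ) (a : ℝ), f ≠ 0 ∧ L = {x | f x = a}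

open Filter Topology

local notation "ℝ²" => EuclideanSpace ℝ (Fin 2)

lemma homothetyImage_eq_image_homothety (S : ℝ²) (c : ℝ) (P : Set ℝ²) :
    homothetyImage S c P = AffineMap.homothety S c '' P := by
  unfold homothetyImage
  congr 1
  funext X
  rw [AffineMap.homothety_apply, vsub_eq_sub, vadd_eq_add, add_comm]

lemma convex_homothetyImage (S : ℝ²) (c : ℝ) {P : Set ℝ²} (hP : Convex ℝ P) :
    Convex ℝ (homothetyImage S c P) := by
  rw [homothetyImage_eq_image_homothety]
  exact hP.affine_image _

lemma interior_homothetyImage {c : ℝ} (hc : c ≠ 0) (S : ℝ²) (P : Set ℝ²) :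
    interior (homothetyImage S c P) = homothetyImage S c (interior P) :=
  (((Homeomorph.subRight S).trans
    ((Homeomorph.smulOfNeZero c hc).trans (Homeomorph.addLeft S))).image_interior P).symm

lemma self_mem_interior_homothetyImage {c : ℝ} (hc : c ≠ 0) {S : ℝ²} {P : Set ℝ²}
    (hS : S ∈ interior P) : S ∈ interior (homothetyImage S c P) := by
  rw [interior_homothetyImage hc]
  exact ⟨S, hS, by simp⟩

lemma eventually_mem_homothetyImage {S z : ℝ²} {c : ℝ} {P : Set ℝ²} (hc : c ≠ 0)
    (hz : z ∈ interior (homothetyImage S c P)) : ∀ᶠ c' in 𝓝 c, z ∈ homothetyImage S c' P := by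
  rw [interior_homothetyImage hc] at hz
  obtain ⟨y, hy, rfl⟩ := hz
  have hcont : ContinuousAt (fun c' : ℝ => S + (c / c') • (y - S)) c := by
    fun_prop (disch := exact hc)
  have hy' : ∀ᶠ c' in 𝓝 c, S + (c / c') • (y - S) ∈ P := by
    refine hcont.preimage_mem_nhds (mem_interior_iff_mem_nhds.1 ?_)
    simpa [div_self hc] using hy
  filter_upwards [hy', eventually_ne_nhds hc] with c' hc' hne
  refine ⟨_, hc', ?_⟩
  simp only [add_sub_cancel_left, smul_smul, mul_div_cancel₀ _ hne]

lemma exists_lt_forall_inter_homothetyImage_nonempty {ι : Type*} [Finite ι]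
    {P : ι → Set ℝ²} {S : ι → ℝ²} {L : Set ℝ²} {c : ℝ} (hc : 0 < c)
    (hL : ∀ i, (L ∩ interior (homothetyImage (S i) c (P i))).Nonempty) :
    ∃ c', 0 < c' ∧ c' < c ∧ ∀ i, (L ∩ homothetyImage (S i) c' (P i)).Nonempty := by
  choose z hzL hz using hL
  have h : ∀ᶠ c' in 𝓝[<] c, 0 < c' ∧ ∀ i, z i ∈ homothetyImage (S i) c' (P i) :=
    ((eventually_gt_nhds hc).and <| eventually_all.2 fun i =>
      eventually_mem_homothetyImage hc.ne' (hz i)).filter_mono nhdsWithin_le_nhds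
  obtain ⟨c', hc'c, hc'0, hz'⟩ := (eventually_mem_nhdsWithin.and h).exists
  exact ⟨c', hc'0, hc'c, fun i => ⟨z i, hzL i, hz' i⟩⟩

lemma exists_translate_forall_inter_interior_nonempty {E ι : Type*} [AddCommGroup E]
    [Module ℝ E] [TopologicalSpace E] [IsTopologicalAddGroup E] [ContinuousSMul ℝ E] [Finite ι]
    {K : ι → Set E} {t : Set E} {k : ι} {x₀ : E} (hKk : Convex ℝ (K k))
    (hx₀ : x₀ ∈ interior (K k)) (htk : (t ∩ K k).Nonempty)
    (hother : ∀ i, i ≠ k → (t ∩ interior (K i)).Nonempty) :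
    ∃ w, ∀ i, ((· + w) '' t ∩ interior (K i)).Nonempty := by
  obtain ⟨p, hpt, hpk⟩ := htk
  have h : ∀ᶠ ε in 𝓝[>] (0 : ℝ), ∀ i, ∃ x ∈ t, x + ε • (x₀ - p) ∈ interior (K i) := by
    refine eventually_all.2 fun i => ?_
    rcases eq_or_ne i k with rfl | hik
    · filter_upwards [Ioc_mem_nhdsGT zero_lt_one] with ε hε
      exact ⟨p, hpt, hKk.add_smul_sub_mem_interior hpk hx₀ hε⟩
    · obtain ⟨x, hxt, hx⟩ := hother i hik
      have hcont : Continuous fun ε : ℝ => x + ε • (x₀ - p) := by fun_prop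
      have hnear : ∀ᶠ ε in 𝓝 (0 : ℝ), x + ε • (x₀ - p) ∈ interior (K i) :=
        hcont.tendsto 0 (by simpa using isOpen_interior.mem_nhds hx)
      exact (hnear.filter_mono nhdsWithin_le_nhds).mono fun ε hε => ⟨x, hxt, hε⟩
  obtain ⟨ε, hε⟩ := h.exists
  refine ⟨ε • (x₀ - p), fun i => ?_⟩
  obtain ⟨x, hxt, hx⟩ := hε i
  exact ⟨_, ⟨x, hxt, rfl⟩, hx⟩

theorem one_touching_set_not_minimal_general {m : ℕ}
    (P : Fin m → Set (EuclideanSpace ℝ (Fin 2)))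
    (S : Fin m → EuclideanSpace ℝ (Fin 2))
    (hconv : ∀ i, Convex ℝ (P i))
    (hS : ∀ i, S i ∈ interior (P i))
    (cm : ℝ) (hcm : 1 < cm)
    (t : Set (EuclideanSpace ℝ (Fin 2)))
    -- `t` is a transversal of the family at ratio `cm`:
    (htr : ∀ i, (t ∩ homothetyImage (S i) cm (P i)).Nonempty)
    (k : Fin m)
    -- `t` meets the interior of every other set:
    (hother : ∀ i, i ≠ k →
      (t ∩ interior (homothetyImage (S i) cm (P i))).Nonempty) :
    ∃ c' : ℝ, 0 < c' ∧ c' < cm ∧ ∃ w : EuclideanSpace ℝ (Fin 2),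
      ∀ i, (((fun x => x + w) '' t) ∩ homothetyImage (S i) c' (P i)).Nonempty := by
  have hcm0 : 0 < cm := zero_lt_one.trans hcm
  obtain ⟨w, hw⟩ := exists_translate_forall_inter_interior_nonempty
    (K := fun i => homothetyImage (S i) cm (P i))
    (convex_homothetyImage (S k) cm (hconv k)) (self_mem_interior_homothetyImage hcm0.ne' (hS k))
    (htr k) hother
  obtain ⟨c', hc'0, hc'cm, hc'⟩ := exists_lt_forall_inter_homothetyImage_nonempty hcm0 hw
  exact ⟨c', hc'0, hc'cm, w, hc'⟩

/-- If the transversal `t` supports exactly one of the expanded sets (index `k`)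
and meets the interiors of all the others, then a translate of `t` is a
transversal for some strictly smaller ratio; hence such a configuration cannot
be minimal. -/
theorem one_touching_set_not_minimal {m : ℕ}
    (P : Fin m → Set (EuclideanSpace ℝ (Fin 2)))
    (S : Fin m → EuclideanSpace ℝ (Fin 2))
    (hcpt : ∀ i, IsCompact (P i)) (hconv : ∀ i, Convex ℝ (P i))
    (hS : ∀ i, S i ∈ interior (P i))
    (cm : ℝ) (hcm : 1 < cm)
    (t : Set (EuclideanSpace ℝ (Fin 2))) (ht : IsLine t)
    -- `t` is a transversal of the family at ratio `cm`:
    (htr : ∀ i, (t ∩ homothetyImage (S i) cm (P i)).Nonempty)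
    (k : Fin m)
    -- `t` supports the `k`-th set:
    (hk : t ∩ interior (homothetyImage (S k) cm (P k)) = ∅)
    -- `t` meets the interior of every other set:
    (hother : ∀ i, i ≠ k →
      (t ∩ interior (homothetyImage (S i) cm (P i))).Nonempty) :
    ∃ c' : ℝ, 0 < c' ∧ c' < cm ∧ ∃ w : EuclideanSpace ℝ (Fin 2),
      ∀ i, (((fun x => x + w) '' t) ∩ homothetyImage (S i) c' (P i)).Nonempty :=
  one_touching_set_not_minimal_general P S hconv hS cm hcm t htr k hother
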